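/- arXiv:1206.2390 — 2 statements merged into one kernel-verified Lean document; each statement's English description precedes it below -/
import Mathlib

section
/- Let g : ℝ → ℝ and σ, τ > 0, and let A be a real number with |A| > 1. If |g(z)| ≤ min{σ, τ/|z|²} for all z ≠ 0, then for every z ≠ 0, ∑_{j ∈ ℤ} |A^j g(A^j z)| ≤ (2|A|/(|A|−1)) · √(στ)/|z|. -/
/-!
With `ρ = √(σ/τ)`, the hypothesis says `|y| |g y| ≤ √(στ) · min (ρ|y|, (ρ|y|)⁻¹)`. Along
`y = A^j z` the numbers `ρ|y|` form a geometric progression of ratio `|A| > 1`; starting at the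
index where it crosses `1`, both tails of `∑ min (x_j, x_j⁻¹)` are dominated by geometric series
of ratio `|A|⁻¹`, each summing to at most `|A|/(|A|-1)`.
-/

open Real

lemma summable_and_tsum_le_of_le_geometric_int {f : ℤ → ℝ} {b : ℝ} (m : ℤ)
    (hf : ∀ j, 0 ≤ f j) (hb₀ : 0 ≤ b) (hb₁ : b < 1)
    (hright : ∀ k : ℕ, f (m + k) ≤ b ^ k) (hleft : ∀ k : ℕ, f (m - (k + 1)) ≤ b ^ k) :
    Summable f ∧ ∑' j, f j ≤ 2 * (1 - b)⁻¹ := by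
  have hgeom := summable_geometric_of_lt_one hb₀ hb₁
  have hr : Summable fun k : ℕ ↦ f (m + k) :=
    hgeom.of_nonneg_of_le (fun k ↦ hf _) hright
  have hl : Summable fun k : ℕ ↦ f (m + -(k + 1)) :=
    hgeom.of_nonneg_of_le (fun k ↦ hf _) (fun k ↦ (sub_eq_add_neg m _) ▸ hleft k)
  have hshift : Summable fun j : ℤ ↦ f (m + j) := .of_nat_of_neg_add_one hr hl
  refine ⟨(Equiv.addLeft m).summable_iff.mp hshift, ?_⟩
  calc ∑' j, f j = ∑' j : ℤ, f (m + j) := ((Equiv.addLeft m).tsum_eq f).symm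
    _ = ∑' k : ℕ, f (m + k) + ∑' k : ℕ, f (m + -(k + 1)) := tsum_of_nat_of_neg_add_one hr hl
    _ ≤ ∑' k : ℕ, b ^ k + ∑' k : ℕ, b ^ k :=
      add_le_add (hr.tsum_le_tsum hright hgeom)
        (hl.tsum_le_tsum (fun k ↦ (sub_eq_add_neg m _) ▸ hleft k) hgeom)
    _ = 2 * (1 - b)⁻¹ := by rw [tsum_geometric_of_lt_one hb₀ hb₁]; ring

lemma summable_and_tsum_min_mul_zpow_inv_le {a c : ℝ} (ha : 1 < a) (hc : 0 < c) :
    Summable (fun j : ℤ ↦ min (c * a ^ j) (c * a ^ j)⁻¹) ∧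
      ∑' j : ℤ, min (c * a ^ j) (c * a ^ j)⁻¹ ≤ 2 * a / (a - 1) := by
  have ha₀ : 0 < a := one_pos.trans ha
  obtain ⟨n, hn_le, hn_lt⟩ := exists_mem_Ico_zpow hc ha
  have h_one_le : 1 ≤ c * a ^ (-n) := by
    rw [zpow_neg, ← div_eq_mul_inv, one_le_div (zpow_pos ha₀ n)]
    exact hn_le
  have h_lt : c * a ^ (-n) < a := by
    rw [zpow_neg, ← div_eq_mul_inv, div_lt_iff₀ (zpow_pos ha₀ n), ← zpow_one_add₀ ha₀.ne', add_comm]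
    exact hn_lt
  have key := summable_and_tsum_le_of_le_geometric_int
    (f := fun j : ℤ ↦ min (c * a ^ j) (c * a ^ j)⁻¹) (b := a⁻¹) (-n)
    (fun j ↦ le_min (by positivity) (by positivity)) (by positivity)
    (inv_lt_one_of_one_lt₀ ha) ?_ ?_
  · refine ⟨key.1, key.2.trans_eq ?_⟩
    field_simp
  · intro k
    refine (min_le_right _ _).trans ?_
    rw [zpow_add₀ ha₀.ne', ← mul_assoc, mul_inv, zpow_natCast, inv_pow]
    exact mul_le_of_le_one_left (by positivity) (inv_le_one_of_one_le₀ h_one_le)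
  · intro k
    refine (min_le_left _ _).trans ?_
    rw [zpow_sub₀ ha₀.ne', zpow_add_one₀ ha₀.ne', zpow_natCast, inv_pow,
      show c * (a ^ (-n) / (a ^ k * a)) = c * a ^ (-n) / a * (a ^ k)⁻¹ by ring]
    exact mul_le_of_le_one_left (by positivity) ((div_le_one ha₀).2 h_lt.le)

lemma min_mul_div_eq_sqrt_mul_min_inv {σ τ : ℝ} (x : ℝ) (hσ : 0 < σ) (hτ : 0 < τ) :
    min (σ * x) (τ / x) = √(σ * τ) * min (√(σ / τ) * x) (√(σ / τ) * x)⁻¹ := by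
  have hρ : √(σ * τ) * √(σ / τ) = σ := by
    rw [← sqrt_mul (by positivity), show σ * τ * (σ / τ) = σ ^ 2 by field_simp, sqrt_sq hσ.le]
  have hτ' : √(σ * τ) / √(σ / τ) = τ := by
    rw [← sqrt_div' _ (by positivity), show σ * τ / (σ / τ) = τ ^ 2 by field_simp, sqrt_sq hτ.le]
  rw [mul_min_of_nonneg _ _ (sqrt_nonneg _), ← mul_assoc, hρ, mul_inv, ← mul_assoc,
    ← div_eq_mul_inv, ← div_eq_mul_inv, hτ']

lemma abs_mul_abs_le_sqrt_mul_min {σ τ y v : ℝ} (hσ : 0 < σ) (hτ : 0 < τ)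
    (hv : |v| ≤ min σ (τ / |y| ^ 2)) :
    |y| * |v| ≤ √(σ * τ) * min (√(σ / τ) * |y|) (√(σ / τ) * |y|)⁻¹ := by
  rw [← min_mul_div_eq_sqrt_mul_min_inv _ hσ hτ]
  calc |y| * |v| ≤ |y| * min σ (τ / |y| ^ 2) := by gcongr
    _ = min (σ * |y|) (τ / |y|) := by
      rw [mul_min_of_nonneg _ _ (abs_nonneg y)]
      congr 1
      · ring
      · rcases eq_or_ne y 0 with rfl | hy
        · simp
        · field_simp

theorem geometric_sum_decay_two (g : ℝ → ℝ) (A σ τ : ℝ) (hσ : 0 < σ) (hτ : 0 < τ)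
    (hA : 1 < |A|)
    (hg : ∀ z : ℝ, z ≠ 0 → |g z| ≤ min σ (τ / |z| ^ 2)) :
    ∀ z : ℝ, z ≠ 0 →
      Summable (fun j : ℤ => |A ^ j * g (A ^ j * z)|) ∧
      ∑' j : ℤ, |A ^ j * g (A ^ j * z)| ≤ (2 * |A| / (|A| - 1)) * Real.sqrt (σ * τ) / |z| := by
  intro z hz
  set K := √(σ * τ) / |z|
  set c := √(σ / τ) * |z|
  have hA₀ : A ≠ 0 := by rintro rfl; norm_num at hA
  have hterm (j : ℤ) : |A ^ j * g (A ^ j * z)| ≤ K * min (c * |A| ^ j) (c * |A| ^ j)⁻¹ := by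
    have hbound := abs_mul_abs_le_sqrt_mul_min hσ hτ (hg (A ^ j * z) (by positivity))
    rw [abs_mul, abs_zpow] at hbound ⊢
    calc |A| ^ j * |g (A ^ j * z)| = |A| ^ j * |z| * |g (A ^ j * z)| / |z| := by field_simp
      _ ≤ √(σ * τ) * min (√(σ / τ) * (|A| ^ j * |z|)) (√(σ / τ) * (|A| ^ j * |z|))⁻¹ / |z| := by
        gcongr
      _ = K * min (c * |A| ^ j) (c * |A| ^ j)⁻¹ := by simp only [K, c]; ring_nf
  obtain ⟨hsum, hle⟩ := summable_and_tsum_min_mul_zpow_inv_le hA (c := c) (by positivity)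
  have hsumK := hsum.mul_left K
  have hsummable := hsumK.of_nonneg_of_le (fun j ↦ abs_nonneg _) hterm
  refine ⟨hsummable, ?_⟩
  calc ∑' j : ℤ, |A ^ j * g (A ^ j * z)|
      ≤ ∑' j : ℤ, K * min (c * |A| ^ j) (c * |A| ^ j)⁻¹ := hsummable.tsum_le_tsum hterm hsumK
    _ = K * ∑' j : ℤ, min (c * |A| ^ j) (c * |A| ^ j)⁻¹ := tsum_mul_left
    _ ≤ K * (2 * |A| / (|A| - 1)) := by gcongr
    _ = 2 * |A| / (|A| - 1) * √(σ * τ) / |z| := by ring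
end

section
/- Let g : ℝ → ℝ and σ, τ > 0, and let A be a real number with |A| > 1. If |g(z)| ≤ min{σ, τ/|z|³} for all z ≠ 0, then for every z ≠ 0, ∑_{j ∈ ℤ} |A^{2j} g(A^j z)| ≤ (|A|(2|A|+1)/(|A|²−1)) · (στ²)^{1/3}/|z|². -/
private lemma cube_root_cube {a : ℝ} (ha : 0 ≤ a) : (a ^ 3) ^ ((1:ℝ)/3) = a := by
  rw [← Real.rpow_natCast a 3, ← Real.rpow_mul ha]
  norm_num

theorem geometric_sum_decay_three (g : ℝ → ℝ) (A σ τ : ℝ) (hσ : 0 < σ) (hτ : 0 < τ)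
    (hA : 1 < |A|)
    (hg : ∀ z : ℝ, z ≠ 0 → |g z| ≤ min σ (τ / |z| ^ 3)) :
    ∀ z : ℝ, z ≠ 0 →
      Summable (fun j : ℤ => |A ^ (2 * j) * g (A ^ j * z)|) ∧
      ∑' j : ℤ, |A ^ (2 * j) * g (A ^ j * z)| ≤
        (|A| * (2 * |A| + 1) / (|A| ^ 2 - 1)) * (σ * τ ^ 2) ^ ((1 : ℝ) / 3) / |z| ^ 2 := by
  intro z hz
  set B := |A| with hB
  have hB0 : (0:ℝ) < B := lt_trans one_pos hA
  have hBne : B ≠ 0 := ne_of_gt hB0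
  have hAne : A ≠ 0 := fun h => by simp [hB, h] at hA; linarith
  have ht : (0:ℝ) < |z| := abs_pos.mpr hz
  set t := |z| with htdef
  have htne : t ≠ 0 := ne_of_gt ht
  -- the threshold
  set R : ℝ := (τ / σ) ^ ((1:ℝ)/3) with hRdef
  have hτσ : (0:ℝ) < τ / σ := div_pos hτ hσ
  have hR : (0:ℝ) < R := Real.rpow_pos_of_pos hτσ _
  have hR3 : R ^ 3 = τ / σ := by
    rw [hRdef, ← Real.rpow_natCast _ 3, ← Real.rpow_mul hτσ.le]
    norm_num
  set K : ℝ := (σ * τ ^ 2) ^ ((1:ℝ)/3) with hKdef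
  have hστ2 : (0:ℝ) < σ * τ ^ 2 := by positivity
  have hK : (0:ℝ) < K := Real.rpow_pos_of_pos hστ2 _
  have hK1 : σ * R ^ 2 = K := by
    have h1 : (σ * R ^ 2) ^ 3 = σ * τ ^ 2 := by
      have : (σ * R ^ 2) ^ 3 = σ ^ 3 * (R ^ 3) ^ 2 := by ring
      rw [this, hR3]
      field_simp
    calc σ * R ^ 2 = ((σ * R ^ 2) ^ 3) ^ ((1:ℝ)/3) := (cube_root_cube (by positivity)).symm
      _ = K := by rw [h1, hKdef]
  have hK2 : τ / R = K := by
    have h1 : (τ / R) ^ 3 = σ * τ ^ 2 := by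
      rw [div_pow, hR3]
      field_simp
    calc τ / R = ((τ / R) ^ 3) ^ ((1:ℝ)/3) := (cube_root_cube (by positivity)).symm
      _ = K := by rw [h1, hKdef]
  -- the splitting index
  set j0 : ℤ := ⌊Real.logb B (R / t)⌋ with hj0def
  have hRt : (0:ℝ) < R / t := div_pos hR ht
  have h1 : B ^ j0 ≤ R / t := by
    have h := Int.floor_le (Real.logb B (R / t))
    calc B ^ j0 = B ^ ((j0 : ℝ)) := by rw [Real.rpow_intCast]
      _ ≤ B ^ Real.logb B (R / t) := by
          exact (Real.rpow_le_rpow_left_iff hA).mpr h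
      _ = R / t := Real.rpow_logb hB0 (ne_of_gt hA) hRt
  have h2 : R / t ≤ B ^ (j0 + 1) := by
    have h := (Int.lt_floor_add_one (Real.logb B (R / t))).le
    calc R / t = B ^ Real.logb B (R / t) := (Real.rpow_logb hB0 (ne_of_gt hA) hRt).symm
      _ ≤ B ^ ((j0 + 1 : ℤ) : ℝ) := by
          apply (Real.rpow_le_rpow_left_iff hA).mpr
          push_cast
          exact h
      _ = B ^ (j0 + 1) := Real.rpow_intCast _ _
  -- the dominating function
  set G1 : ℤ → ℝ := fun j => if j ≤ j0 then σ * B ^ (2 * j) else 0 with hG1def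
  set G2 : ℤ → ℝ := fun j => if j ≤ j0 then 0 else τ / t ^ 3 * B ^ (-j) with hG2def
  set F : ℤ → ℝ := fun j => |A ^ (2 * j) * g (A ^ j * z)| with hFdef
  have habsz : ∀ (a : ℝ) (n : ℤ), |a ^ n| = |a| ^ n := fun a n =>
    map_zpow₀ (absHom : ℝ →*₀ ℝ) a n
  have hFval : ∀ j : ℤ, F j = B ^ (2 * j) * |g (A ^ j * z)| := by
    intro j
    show |A ^ (2 * j) * g (A ^ j * z)| = B ^ (2 * j) * |g (A ^ j * z)|
    rw [abs_mul, habsz]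
  have hAz : ∀ j : ℤ, A ^ j * z ≠ 0 := fun j =>
    mul_ne_zero (zpow_ne_zero j hAne) hz
  have habs : ∀ j : ℤ, |A ^ j * z| = B ^ j * t := by
    intro j; rw [abs_mul, habsz]
  have hFG : ∀ j : ℤ, F j ≤ G1 j + G2 j := by
    intro j
    rw [hFval]
    rcases le_or_gt j j0 with hc | hc
    · have : G1 j + G2 j = σ * B ^ (2 * j) := by
        rw [hG1def, hG2def]; simp [hc]
      rw [this]
      have := (hg _ (hAz j)).trans (min_le_left _ _)
      calc B ^ (2*j) * |g (A ^ j * z)| ≤ B ^ (2*j) * σ := by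
            apply mul_le_mul_of_nonneg_left this (zpow_nonneg hB0.le _)
        _ = σ * B ^ (2*j) := mul_comm _ _
    · have hcc : ¬ j ≤ j0 := not_le.mpr hc
      have : G1 j + G2 j = τ / t ^ 3 * B ^ (-j) := by
        rw [hG1def, hG2def]; simp [hcc]
      rw [this]
      have hgle := (hg _ (hAz j)).trans (min_le_right _ _)
      rw [habs j] at hgle
      calc B ^ (2*j) * |g (A ^ j * z)| ≤ B ^ (2*j) * (τ / (B ^ j * t) ^ 3) := by
            apply mul_le_mul_of_nonneg_left hgle (zpow_nonneg hB0.le _)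
        _ = τ / t ^ 3 * B ^ (-j) := by
            have e : (B ^ j * t) ^ 3 = B ^ (3 * j) * t ^ 3 := by
              rw [mul_pow, ← zpow_natCast (B ^ j), ← zpow_mul]
              norm_num [mul_comm]
            rw [e]
            have h3 : B ^ (3 * j) = B ^ (2 * j) * B ^ j := by
              rw [← zpow_add₀ hBne]; ring_nf
            have hBz : (0:ℝ) < B ^ j := zpow_pos hB0 j
            have hB2z : (0:ℝ) < B ^ (2*j) := zpow_pos hB0 _
            rw [h3, zpow_neg]
            field_simp
  -- geometric pieces
  have hBinv : (B ^ 2)⁻¹ < 1 := by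
    rw [inv_lt_one_iff₀]; right; nlinarith
  have hBinv0 : (0:ℝ) ≤ (B ^ 2)⁻¹ := by positivity
  have hBinv1 : B⁻¹ < 1 := by rw [inv_lt_one_iff₀]; right; exact hA
  have hBinv10 : (0:ℝ) ≤ B⁻¹ := by positivity
  -- piece 1
  have hi1 : Function.Injective (fun n : ℕ => j0 - n) := by
    intro a b hab; simp only at hab; omega
  have hr1 : ∀ j ∉ Set.range (fun n : ℕ => j0 - (n:ℤ)), G1 j = 0 := by
    intro j hj
    rw [hG1def]
    simp only [ite_eq_right_iff]
    intro hle
    exfalso; apply hj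
    exact ⟨(j0 - j).toNat, by show j0 - ((j0 - j).toNat : ℤ) = j; omega⟩
  have hcomp1 : ∀ n : ℕ, G1 (j0 - n) = σ * B ^ (2 * j0) * ((B ^ 2)⁻¹) ^ n := by
    intro n
    have e : B ^ (2 * (j0 - (n:ℤ))) = B ^ (2 * j0) * ((B ^ 2)⁻¹) ^ n := by
      rw [show (2:ℤ) * (j0 - (n:ℤ)) = 2 * j0 + (-(2 * (n:ℤ))) by ring, zpow_add₀ hBne]
      congr 1
      rw [zpow_neg, show (2:ℤ) * (n:ℤ) = (((2 * n : ℕ)):ℤ) by push_cast; ring,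
        zpow_natCast, pow_mul, ← inv_pow]
    rw [hG1def]
    simp only [sub_le_self_iff, Int.ofNat_nonneg, if_true, Nat.cast_nonneg]
    rw [e, mul_assoc]
  have hsum1 : Summable (fun n : ℕ => G1 (j0 - n)) := by
    rw [funext hcomp1]
    exact (summable_geometric_of_lt_one hBinv0 hBinv).mul_left _
  have hG1sum : Summable G1 := by
    rw [← Function.Injective.summable_iff hi1 hr1]
    exact hsum1
  have hs1 : Function.support G1 ⊆ Set.range (fun n : ℕ => j0 - (n:ℤ)) := by
    intro j hj
    by_contra hc
    exact hj (hr1 j hc)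
  have hG1tsum : ∑' j : ℤ, G1 j = σ * B ^ (2 * j0) * (1 - (B ^ 2)⁻¹)⁻¹ := by
    rw [← Function.Injective.tsum_eq hi1 hs1, funext hcomp1, tsum_mul_left,
      tsum_geometric_of_lt_one hBinv0 hBinv]
  -- piece 2
  have hi2 : Function.Injective (fun n : ℕ => j0 + 1 + n) := by
    intro a b hab; simp only at hab; omega
  have hr2 : ∀ j ∉ Set.range (fun n : ℕ => j0 + 1 + (n:ℤ)), G2 j = 0 := by
    intro j hj
    have hle : j ≤ j0 := by
      by_contra h
      exact hj ⟨(j - j0 - 1).toNat, by show j0 + 1 + ((j - j0 - 1).toNat : ℤ) = j; omega⟩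
    rw [hG2def]
    simp [hle]
  have hcomp2 : ∀ n : ℕ, G2 (j0 + 1 + n) = τ / t ^ 3 * B ^ (-(j0+1)) * (B⁻¹) ^ n := by
    intro n
    have e : B ^ (-(j0 + 1 + (n:ℤ))) = B ^ (-(j0+1)) * (B⁻¹) ^ n := by
      rw [show -(j0 + 1 + (n:ℤ)) = -(j0+1) + (-(n:ℤ)) by ring, zpow_add₀ hBne]
      congr 1
      rw [zpow_neg, zpow_natCast, inv_pow]
    rw [hG2def]
    simp only
    rw [if_neg (by omega), e, mul_assoc]
  have hsum2 : Summable (fun n : ℕ => G2 (j0 + 1 + n)) := by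
    rw [funext hcomp2]
    exact (summable_geometric_of_lt_one hBinv10 hBinv1).mul_left _
  have hG2sum : Summable G2 := by
    rw [← Function.Injective.summable_iff hi2 hr2]
    exact hsum2
  have hs2 : Function.support G2 ⊆ Set.range (fun n : ℕ => j0 + 1 + (n:ℤ)) := by
    intro j hj
    by_contra hc
    exact hj (hr2 j hc)
  have hG2tsum : ∑' j : ℤ, G2 j = τ / t ^ 3 * B ^ (-(j0+1)) * (1 - B⁻¹)⁻¹ := by
    rw [← Function.Injective.tsum_eq hi2 hs2, funext hcomp2, tsum_mul_left,
      tsum_geometric_of_lt_one hBinv10 hBinv1]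
  -- summability of F
  have hGsum : Summable (fun j : ℤ => G1 j + G2 j) := hG1sum.add hG2sum
  have hFsum : Summable F := by
    apply Summable.of_nonneg_of_le (fun j => abs_nonneg _) hFG hGsum
  refine ⟨hFsum, ?_⟩
  -- bounds on the two pieces
  have hB2m1 : (0:ℝ) < B ^ 2 - 1 := by nlinarith
  have hBm1 : (0:ℝ) < B - 1 := by linarith
  have hbound1 : σ * B ^ (2 * j0) * (1 - (B ^ 2)⁻¹)⁻¹ ≤ K / t ^ 2 * (B ^ 2 / (B ^ 2 - 1)) := by
    have e1 : (1 - (B ^ 2)⁻¹)⁻¹ = B ^ 2 / (B ^ 2 - 1) := by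
      have e0 : 1 - (B ^ 2)⁻¹ = (B ^ 2 - 1) / B ^ 2 := by field_simp
      rw [e0, inv_div]
    rw [e1]
    apply mul_le_mul_of_nonneg_right _ (by positivity)
    have hzp : B ^ (2 * j0) = (B ^ j0) ^ 2 := by
      rw [show (2:ℤ) * j0 = j0 * 2 by ring, zpow_mul, zpow_two, sq]
    rw [hzp]
    have hle : (B ^ j0) ^ 2 ≤ (R / t) ^ 2 :=
      pow_le_pow_left₀ (zpow_nonneg hB0.le _) h1 2
    calc σ * (B ^ j0) ^ 2 ≤ σ * (R / t) ^ 2 := by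
          apply mul_le_mul_of_nonneg_left hle hσ.le
      _ = K / t ^ 2 := by rw [div_pow, ← hK1]; ring
  have hbound2 : τ / t ^ 3 * B ^ (-(j0+1)) * (1 - B⁻¹)⁻¹ ≤ K / t ^ 2 * (B / (B - 1)) := by
    have e1 : (1 - B⁻¹)⁻¹ = B / (B - 1) := by
      have e0 : 1 - B⁻¹ = (B - 1) / B := by field_simp
      rw [e0, inv_div]
    rw [e1]
    apply mul_le_mul_of_nonneg_right _ (by positivity)
    have hle : B ^ (-(j0+1)) ≤ t / R := by
      rw [zpow_neg]
      rw [show t / R = (R / t)⁻¹ by rw [inv_div]]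
      exact inv_anti₀ hRt h2
    calc τ / t ^ 3 * B ^ (-(j0+1)) ≤ τ / t ^ 3 * (t / R) := by
          apply mul_le_mul_of_nonneg_left hle (by positivity)
      _ = (τ / R) / t ^ 2 := by field_simp
      _ = K / t ^ 2 := by rw [hK2]
  -- assemble
  have htsum : ∑' j : ℤ, F j ≤ ∑' j : ℤ, (G1 j + G2 j) :=
    Summable.tsum_le_tsum hFG hFsum hGsum
  have hsplit : ∑' j : ℤ, (G1 j + G2 j) = (∑' j : ℤ, G1 j) + (∑' j : ℤ, G2 j) :=
    Summable.tsum_add hG1sum hG2sum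
  calc ∑' j : ℤ, F j ≤ (∑' j : ℤ, G1 j) + (∑' j : ℤ, G2 j) := by rw [← hsplit]; exact htsum
    _ ≤ K / t ^ 2 * (B ^ 2 / (B ^ 2 - 1)) + K / t ^ 2 * (B / (B - 1)) := by
        rw [hG1tsum, hG2tsum]
        exact add_le_add hbound1 hbound2
    _ = (B * (2 * B + 1) / (B ^ 2 - 1)) * K / t ^ 2 := by
        have hBp1 : B + 1 ≠ 0 := by positivity
        have hBm1' : B - 1 ≠ 0 := ne_of_gt hBm1
        have : B ^ 2 - 1 = (B - 1) * (B + 1) := by ring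
        rw [this]
        field_simp
        ring
end
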